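/- For every η ∈ ℝ and every unit vector n ∈ 𝕊², the fourth moment M⁽⁴⁾_{αβγμ} = ∫_{𝕊²} m_α m_β m_γ m_μ h_{η,n}(m) dσ(m) satisfies, for all indices α,β,γ,μ ∈ {1,2,3}: M⁽⁴⁾_{αβγμ} = S₄ n_α n_β n_γ n_μ + ((S₂ − S₄)/7)(n_α n_β δ_{γμ} + n_γ n_μ δ_{αβ} + n_α n_γ δ_{βμ} + n_β n_μ δ_{αγ} + n_α n_μ δ_{βγ} + n_β n_γ δ_{αμ}) + (S₄/35 − 2S₂/21 + 1/15)(δ_{αβ}δ_{γμ} + δ_{αγ}δ_{βμ} + δ_{αμ}δ_{βγ}), where S₂ = ∫_{𝕊²} P₂(m·n) h_{η,n} dσ, S₄ = ∫_{𝕊²} P₄(m·n) h_{η,n} dσ, P₂(t) = (3t² − 1)/2 and P₄(t) = (35t⁴ − 30t² + 3)/8. -/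

import Mathlib

open MeasureTheory Real

noncomputable section

abbrev E3 : Type := EuclideanSpace ℝ (Fin 3)
abbrev S2 : Type := Metric.sphere (0 : E3) 1

/-- The standard (rotation-invariant) surface measure on 𝕊², of total mass 4π. -/
noncomputable def sigma3 : Measure S2 := (volume : Measure E3).toSphere

/-- The family `h_{η,n}(m) = e^{η (m·n)²} / ∫ e^{η (m'·n)²} dσ(m')`. -/
noncomputable def hdens (η : ℝ) (n : S2) (m : S2) : ℝ :=
  Real.exp (η * (inner ℝ (m : E3) (n : E3) : ℝ) ^ 2) /
    ∫ m' : S2, Real.exp (η * (inner ℝ (m' : E3) (n : E3) : ℝ) ^ 2) ∂sigma3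

/-- The Legendre polynomial `P₂(t) = (3t² − 1)/2`. -/
noncomputable def P2 (t : ℝ) : ℝ := (3 * t ^ 2 - 1) / 2

/-- The Legendre polynomial `P₄(t) = (35t⁴ − 30t² + 3)/8`. -/
noncomputable def P4 (t : ℝ) : ℝ := (35 * t ^ 4 - 30 * t ^ 2 + 3) / 8

/-- The order parameter `S₂ = ∫ P₂(m·n) h_{η,n}(m) dσ(m)`. -/
noncomputable def Sord2 (η : ℝ) (n : S2) : ℝ :=
  ∫ m : S2, P2 (inner ℝ (m : E3) (n : E3) : ℝ) * hdens η n m ∂sigma3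

/-- The order parameter `S₄ = ∫ P₄(m·n) h_{η,n}(m) dσ(m)`. -/
noncomputable def Sord4 (η : ℝ) (n : S2) : ℝ :=
  ∫ m : S2, P4 (inner ℝ (m : E3) (n : E3) : ℝ) * hdens η n m ∂sigma3

/-- The Kronecker delta `δ_{ij}`. -/
noncomputable def kron (i j : Fin 3) : ℝ := if i = j then 1 else 0

/-!
Reflecting `n` onto the coordinate axis `e₂` (reflections preserve `σ`) turns the weight into a
function of `m₂` alone. The fourth moments of such an axially symmetric weight are fixed by the
isometries that fix the axis: reflecting `e₀` kills every moment with an odd power of `m₀`,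
swapping `e₀` and `e₁` makes the two transverse directions interchangeable, and the reflection
taking `e₀` to `(e₀ + e₁)/√2` gives `∫ m₀⁴ = 3 ∫ m₀² m₁²`. Together with `m₀² + m₁² + m₂² = 1`
this expresses every moment through the zonal moments `∫ (m·n)ᵏ h` for `k = 0, 2, 4`, of which
`S₂` and `S₄` are linear combinations.
-/

open scoped Pointwise RealInnerProductSpace

section SphereInvariance

variable {E : Type*} [NormedAddCommGroup E] [NormedSpace ℝ E]

def LinearIsometryEquiv.sphereHomeomorph (f : E ≃ₗᵢ[ℝ] E) :
    Metric.sphere (0 : E) 1 ≃ₜ Metric.sphere (0 : E) 1 :=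
  f.toHomeomorph.subtype fun x => by simp

@[simp]
lemma LinearIsometryEquiv.coe_sphereHomeomorph (f : E ≃ₗᵢ[ℝ] E) (x : Metric.sphere (0 : E) 1) :
    (f.sphereHomeomorph x : E) = f x := rfl

lemma LinearIsometryEquiv.smul_preimage (f : E ≃ₗᵢ[ℝ] E) (t : Set ℝ) (X : Set E) :
    t • f ⁻¹' X = f ⁻¹' (t • X) := by
  ext x
  simp only [Set.mem_smul, Set.mem_preimage]
  constructor
  · rintro ⟨c, hc, y, hy, rfl⟩
    exact ⟨c, hc, f y, hy, (f.map_smul c y).symm⟩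
  · rintro ⟨c, hc, z, hz, hx⟩
    exact ⟨c, hc, f.symm z, by simpa, f.injective (by simp [hx])⟩

variable [MeasurableSpace E] [BorelSpace E]

lemma MeasureTheory.MeasurePreserving.toSphere {μ : Measure E} {f : E ≃ₗᵢ[ℝ] E}
    (hf : MeasurePreserving f μ μ) :
    MeasurePreserving f.sphereHomeomorph μ.toSphere μ.toSphere := by
  refine ⟨f.sphereHomeomorph.continuous.measurable, Measure.ext fun s hs => ?_⟩
  have himage : ((↑) '' (f.sphereHomeomorph ⁻¹' s) : Set E) = f ⁻¹' ((↑) '' s) := by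
    ext x
    constructor
    · rintro ⟨m, hm, rfl⟩
      exact ⟨_, hm, rfl⟩
    · rintro ⟨m, hm, hx⟩
      exact ⟨f.sphereHomeomorph.symm m, by simpa using hm, by
        show f.symm m = x
        rw [hx, f.symm_apply_apply]⟩
  rw [Measure.map_apply f.sphereHomeomorph.continuous.measurable hs,
    μ.toSphere_apply' hs, μ.toSphere_apply' (f.sphereHomeomorph.continuous.measurable hs),
    himage, f.smul_preimage, hf.measure_preimage_emb f.toHomeomorph.measurableEmbedding]

end SphereInvariance

lemma integral_sigma3_comp (f : E3 ≃ₗᵢ[ℝ] E3) (F : S2 → ℝ) :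
    ∫ m, F (f.sphereHomeomorph m) ∂sigma3 = ∫ m, F m ∂sigma3 :=
  (f.measurePreserving.toSphere).integral_comp f.sphereHomeomorph.measurableEmbedding F

instance : IsFiniteMeasure sigma3 := inferInstanceAs (IsFiniteMeasure (Measure.toSphere _))

lemma integrable_sigma3_of_continuous {F : S2 → ℝ} (hF : Continuous F) : Integrable F sigma3 :=
  hF.integrable_of_hasCompactSupport (HasCompactSupport.of_compactSpace F)

instance : NeZero sigma3 := ⟨Measure.toSphere_ne_zero _⟩

lemma Submodule.reflection_orthogonal_singleton_apply {E : Type*} [NormedAddCommGroup E]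
    [InnerProductSpace ℝ E] (v x : E) :
    (ℝ ∙ v)ᗮ.reflection x = x - (2 * ⟪v, x⟫ / ‖v‖ ^ 2) • v := by
  rw [Submodule.reflection_orthogonal_apply, Submodule.reflection_singleton_apply]
  simp only [RCLike.ofReal_real_eq_id, id, two_smul]
  module

lemma EuclideanSpace.reflection_orthogonal_singleton_apply {ι : Type*} [Fintype ι]
    (v x : EuclideanSpace ℝ ι) (i : ι) :
    (ℝ ∙ v)ᗮ.reflection x i = x i - 2 * ⟪v, x⟫ / ‖v‖ ^ 2 * v i := by
  simp [Submodule.reflection_orthogonal_singleton_apply]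

lemma EuclideanSpace.reflection_orthogonal_single_apply {ι : Type*} [Fintype ι] [DecidableEq ι]
    (c : ι) (x : EuclideanSpace ℝ ι) (i : ι) :
    (ℝ ∙ EuclideanSpace.single c 1)ᗮ.reflection x i = if i = c then -x i else x i := by
  rw [EuclideanSpace.reflection_orthogonal_singleton_apply]
  split_ifs with h <;> simp [EuclideanSpace.inner_single_left, h]
  ring

lemma sphere_coord_sq_sum (m : S2) : (m : E3) 0 ^ 2 + (m : E3) 1 ^ 2 + (m : E3) 2 ^ 2 = 1 := by
  have h := EuclideanSpace.norm_sq_eq (m : E3)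
  simp only [norm_eq_of_mem_sphere m, Fin.sum_univ_three, Real.norm_eq_abs, sq_abs] at h
  linarith

section AxialQuartic

variable {E : Type*} [NormedAddCommGroup E] [InnerProductSpace ℝ E]

def transverseInner (e a b : E) : ℝ := ⟪a, b⟫ - ⟪a, e⟫ * ⟪b, e⟫

-- The general symmetric fourth-order tensor invariant under the isometries fixing `e`.
def axialQuartic (p q r : ℝ) (e a b c d : E) : ℝ :=
  p * (transverseInner e a b * transverseInner e c d +
      transverseInner e a c * transverseInner e b d +
      transverseInner e a d * transverseInner e b c) +
    q * (transverseInner e a b * ⟪c, e⟫ * ⟪d, e⟫ + transverseInner e c d * ⟪a, e⟫ * ⟪b, e⟫ +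
      transverseInner e a c * ⟪b, e⟫ * ⟪d, e⟫ + transverseInner e b d * ⟪a, e⟫ * ⟪c, e⟫ +
      transverseInner e a d * ⟪b, e⟫ * ⟪c, e⟫ + transverseInner e b c * ⟪a, e⟫ * ⟪d, e⟫) +
    r * (⟪a, e⟫ * ⟪b, e⟫ * ⟪c, e⟫ * ⟪d, e⟫)

@[simp]
lemma axialQuartic_map (R : E ≃ₗᵢ[ℝ] E) (p q r : ℝ) (e a b c d : E) :
    axialQuartic p q r (R e) (R a) (R b) (R c) (R d) = axialQuartic p q r e a b c d := by
  simp [axialQuartic, transverseInner]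

end AxialQuartic

section AxialFrame

variable (g : ℝ → ℝ)

def axialMoment (p q r : ℕ) : ℝ :=
  ∫ m : S2, (m : E3) 0 ^ p * (m : E3) 1 ^ q * (m : E3) 2 ^ r * g ((m : E3) 2) ∂sigma3

variable {g}

lemma integral_comp_mul_axial (R : E3 ≃ₗᵢ[ℝ] E3) (hR : ∀ x, R x 2 = x 2) (φ : E3 → ℝ) :
    ∫ m : S2, φ (R m) * g ((m : E3) 2) ∂sigma3 = ∫ m : S2, φ m * g ((m : E3) 2) ∂sigma3 := by
  rw [← integral_sigma3_comp R (fun m => φ m * g ((m : E3) 2))]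
  simp [hR]

lemma axialMoment_eq_zero_of_odd_left {p : ℕ} (hp : Odd p) (q r : ℕ) :
    axialMoment g p q r = 0 := by
  have h := integral_comp_mul_axial (g := g) (ℝ ∙ EuclideanSpace.single 0 1)ᗮ.reflection
    (fun x => by simp [EuclideanSpace.reflection_orthogonal_single_apply])
    (fun x => x 0 ^ p * x 1 ^ q * x 2 ^ r)
  simp [EuclideanSpace.reflection_orthogonal_single_apply, hp.neg_pow, integral_neg] at h
  rw [axialMoment]
  linarith

lemma axialMoment_comm (p q r : ℕ) : axialMoment g p q r = axialMoment g q p r := by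
  set v : E3 := EuclideanSpace.single 0 1 - EuclideanSpace.single 1 1
  have hv : ‖v‖ ^ 2 = 2 := by
    rw [EuclideanSpace.norm_sq_eq]
    simp [v, Fin.sum_univ_three]
    norm_num
  have hR (x : E3) (i : Fin 3) : (ℝ ∙ v)ᗮ.reflection x i = x (Equiv.swap 0 1 i) := by
    rw [EuclideanSpace.reflection_orthogonal_singleton_apply, hv]
    fin_cases i <;>
      simp [v, inner_sub_left, EuclideanSpace.inner_single_left, Equiv.swap_apply_of_ne_of_ne]
  have h := integral_comp_mul_axial (g := g) (ℝ ∙ v)ᗮ.reflection (fun x => hR x 2)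
    (fun x => x 0 ^ p * x 1 ^ q * x 2 ^ r)
  simp only [hR] at h
  rw [axialMoment, axialMoment, ← h]
  congr 1 with m
  rw [Equiv.swap_apply_left, Equiv.swap_apply_right,
    Equiv.swap_apply_of_ne_of_ne (by decide) (by decide)]
  ring

lemma axialMoment_eq_zero_of_odd_middle (p : ℕ) {q : ℕ} (hq : Odd q) (r : ℕ) :
    axialMoment g p q r = 0 := by
  rw [axialMoment_comm, axialMoment_eq_zero_of_odd_left hq]

lemma axialMoment_add_two (hg : Continuous g) (p q r : ℕ) :
    axialMoment g (p + 2) q r + axialMoment g p (q + 2) r + axialMoment g p q (r + 2) =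
      axialMoment g p q r := by
  simp only [axialMoment]
  rw [← integral_add, ← integral_add]
  · congr 1 with m
    linear_combination ((m : E3) 0 ^ p * (m : E3) 1 ^ q * (m : E3) 2 ^ r * g ((m : E3) 2)) *
      sphere_coord_sq_sum m
  all_goals exact integrable_sigma3_of_continuous (by fun_prop)

lemma axialMoment_four_zero_zero (hg : Continuous g) :
    axialMoment g 4 0 0 = 3 * axialMoment g 2 2 0 := by
  set w : E3 := (√2)⁻¹ • (EuclideanSpace.single 0 1 + EuclideanSpace.single 1 1)
  set R := (ℝ ∙ (EuclideanSpace.single 0 1 - w))ᗮ.reflection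
  have hw : ‖EuclideanSpace.single (0 : Fin 3) (1 : ℝ)‖ = ‖w‖ := by
    refine (sq_eq_sq₀ (norm_nonneg _) (norm_nonneg _)).mp ?_
    rw [EuclideanSpace.norm_sq_eq, EuclideanSpace.norm_sq_eq]
    simp [w, Fin.sum_univ_three]
    norm_num
  have hR0 (x : E3) : R x 0 = (x 0 + x 1) / √2 := by
    have hRe : R (EuclideanSpace.single 0 1) = w := Submodule.reflection_sub hw
    calc R x 0 = ⟪R (EuclideanSpace.single 0 1), x⟫ := by
          rw [LinearIsometryEquiv.inner_map_eq_flip]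
          simp [R, EuclideanSpace.inner_single_left]
      _ = (x 0 + x 1) / √2 := by
          rw [hRe]
          simp [w, inner_add_left, inner_smul_left, EuclideanSpace.inner_single_left]
          ring
  have hR2 (x : E3) : R x 2 = x 2 := by
    rw [EuclideanSpace.reflection_orthogonal_singleton_apply]
    simp [w]
  have h := integral_comp_mul_axial (g := g) R hR2 (fun x => x 0 ^ 4)
  simp only [hR0] at h
  have hexp : ∫ m : S2, (((m : E3) 0 + (m : E3) 1) / √2) ^ 4 * g ((m : E3) 2) ∂sigma3 =
      (axialMoment g 4 0 0 + 4 * axialMoment g 3 1 0 + 6 * axialMoment g 2 2 0 +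
        4 * axialMoment g 1 3 0 + axialMoment g 0 4 0) / 4 := by
    simp only [axialMoment, ← integral_const_mul]
    rw [← integral_add, ← integral_add, ← integral_add, ← integral_add, ← integral_div]
    · congr 1 with m
      have h2 : √2 ^ 4 = 4 := by
        rw [show (4 : ℕ) = 2 * 2 from rfl, pow_mul, Real.sq_sqrt zero_le_two]; norm_num
      rw [div_pow, h2]
      ring
    all_goals exact integrable_sigma3_of_continuous (by fun_prop)
  have h400 : ∫ m : S2, (m : E3) 0 ^ 4 * g ((m : E3) 2) ∂sigma3 = axialMoment g 4 0 0 := by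
    simp [axialMoment]
  rw [hexp, h400, axialMoment_eq_zero_of_odd_left (by decide : Odd 3),
    axialMoment_eq_zero_of_odd_left (by decide : Odd 1), axialMoment_comm 0 4 0] at h
  linarith

lemma integral_coord_mul_axial (i j k l : Fin 3) :
    ∫ m : S2, (m : E3) i * (m : E3) j * (m : E3) k * (m : E3) l * g ((m : E3) 2) ∂sigma3 =
      axialMoment g ([i, j, k, l].count 0) ([i, j, k, l].count 1) ([i, j, k, l].count 2) := by
  have key (x : E3) (i : Fin 3) :
      x i = x 0 ^ [i].count 0 * x 1 ^ [i].count 1 * x 2 ^ [i].count 2 := by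
    fin_cases i <;> simp
  rw [axialMoment]
  congr 1 with m
  rw [key m i, key m j, key m k, key m l]
  simp only [List.count_cons, List.count_nil]
  ring

lemma axialMoment_two_zero_two (hg : Continuous g) :
    axialMoment g 2 0 2 = (axialMoment g 0 0 2 - axialMoment g 0 0 4) / 2 := by
  have h := axialMoment_add_two hg 0 0 2
  rw [axialMoment_comm 0 2 2] at h
  linarith

lemma axialMoment_two_two_zero (hg : Continuous g) :
    axialMoment g 2 2 0 =
      (axialMoment g 0 0 0 - 2 * axialMoment g 0 0 2 + axialMoment g 0 0 4) / 8 := by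
  have h₀ := axialMoment_add_two hg 0 0 0
  have h₂ := axialMoment_add_two hg 2 0 0
  rw [axialMoment_comm 0 2 0, axialMoment_four_zero_zero hg, axialMoment_two_zero_two hg] at *
  linarith

lemma inner_eq_sum_coord (a x : E3) : ⟪a, x⟫ = a 0 * x 0 + a 1 * x 1 + a 2 * x 2 := by
  simp [PiLp.inner_apply, Fin.sum_univ_three, mul_comm]

lemma integral_inner_mul_axial (hg : Continuous g) (a b c d : E3) :
    ∫ m : S2, ⟪a, (m : E3)⟫ * ⟪b, (m : E3)⟫ * ⟪c, (m : E3)⟫ * ⟪d, (m : E3)⟫ * g ((m : E3) 2)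
        ∂sigma3 =
      axialQuartic ((axialMoment g 0 0 0 - 2 * axialMoment g 0 0 2 + axialMoment g 0 0 4) / 8)
        ((axialMoment g 0 0 2 - axialMoment g 0 0 4) / 2) (axialMoment g 0 0 4)
        (EuclideanSpace.single 2 1) a b c d := by
  rw [← axialMoment_two_two_zero hg, ← axialMoment_two_zero_two hg]
  have hexpand (m : S2) :
      ⟪a, (m : E3)⟫ * ⟪b, (m : E3)⟫ * ⟪c, (m : E3)⟫ * ⟪d, (m : E3)⟫ * g ((m : E3) 2) =
        ∑ v : Fin 3 × Fin 3 × Fin 3 × Fin 3, a v.1 * b v.2.1 * c v.2.2.1 * d v.2.2.2 *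
          ((m : E3) v.1 * (m : E3) v.2.1 * (m : E3) v.2.2.1 * (m : E3) v.2.2.2 *
            g ((m : E3) 2)) := by
    simp only [inner_eq_sum_coord, Fintype.sum_prod_type, Fin.sum_univ_three]
    ring
  rw [integral_congr_ae (.of_forall hexpand), integral_finsetSum _ fun v _ =>
    (integrable_sigma3_of_continuous (by fun_prop)).const_mul _]
  simp only [integral_const_mul, integral_coord_mul_axial, Fintype.sum_prod_type,
    Fin.sum_univ_three]
  simp [axialMoment_eq_zero_of_odd_left, axialMoment_eq_zero_of_odd_middle, Nat.odd_iff,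
    axialMoment_four_zero_zero hg, axialMoment_comm 0 4 0, axialMoment_comm 0 2 2, axialQuartic,
    transverseInner, inner_eq_sum_coord]
  ring

end AxialFrame

section Zonal

variable {g : ℝ → ℝ}

def zonalMoment (g : ℝ → ℝ) (e : E3) (k : ℕ) : ℝ :=
  ∫ m : S2, ⟪(m : E3), e⟫ ^ k * g ⟪(m : E3), e⟫ ∂sigma3

lemma zonalMoment_map (R : E3 ≃ₗᵢ[ℝ] E3) (e : E3) (k : ℕ) :
    zonalMoment g (R e) k = zonalMoment g e k := by
  rw [zonalMoment, zonalMoment,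
    ← integral_sigma3_comp R.symm (fun m => ⟪(m : E3), e⟫ ^ k * g ⟪(m : E3), e⟫)]
  simp [LinearIsometryEquiv.inner_map_eq_flip]

lemma zonalMoment_single_two (k : ℕ) :
    zonalMoment g (EuclideanSpace.single 2 1) k = axialMoment g 0 0 k := by
  simp [zonalMoment, axialMoment, EuclideanSpace.inner_single_right]

theorem integral_inner_mul_zonal (hg : Continuous g) {e : E3} (he : ‖e‖ = 1) (a b c d : E3) :
    ∫ m : S2, ⟪a, (m : E3)⟫ * ⟪b, (m : E3)⟫ * ⟪c, (m : E3)⟫ * ⟪d, (m : E3)⟫ * g ⟪(m : E3), e⟫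
        ∂sigma3 =
      axialQuartic ((zonalMoment g e 0 - 2 * zonalMoment g e 2 + zonalMoment g e 4) / 8)
        ((zonalMoment g e 2 - zonalMoment g e 4) / 2) (zonalMoment g e 4) e a b c d := by
  set Q := (ℝ ∙ (EuclideanSpace.single 2 1 - e))ᗮ.reflection
  have hQ : Q (EuclideanSpace.single 2 1) = e := Submodule.reflection_sub (by simp [he])
  have hQ_inner (x y : E3) : ⟪Q x, y⟫ = ⟪x, Q y⟫ := by
    rw [LinearIsometryEquiv.inner_map_eq_flip]
    rfl
  have hQQ (x : E3) : Q (Q x) = x := Submodule.reflection_reflection _ x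
  have hQ_axis (x : E3) : ⟪Q x, e⟫ = x 2 := by
    rw [hQ_inner, ← hQ, hQQ, EuclideanSpace.inner_single_right]
    simp
  have hzonal (k : ℕ) : zonalMoment g e k = axialMoment g 0 0 k := by
    rw [← hQ, zonalMoment_map, zonalMoment_single_two]
  rw [← integral_sigma3_comp Q]
  simp only [LinearIsometryEquiv.coe_sphereHomeomorph, ← hQ_inner, hQ_axis]
  rw [integral_inner_mul_axial hg, ← axialQuartic_map Q, hQ]
  simp only [hQQ, hzonal]

lemma integral_even_quartic_mul_zonal (hg : Continuous g) (e : E3) (c₀ c₂ c₄ : ℝ) :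
    ∫ m : S2, (c₀ + c₂ * ⟪(m : E3), e⟫ ^ 2 + c₄ * ⟪(m : E3), e⟫ ^ 4) * g ⟪(m : E3), e⟫ ∂sigma3 =
      c₀ * zonalMoment g e 0 + c₂ * zonalMoment g e 2 + c₄ * zonalMoment g e 4 := by
  simp only [zonalMoment, ← integral_const_mul]
  rw [← integral_add, ← integral_add]
  · congr 1 with m
    ring
  all_goals exact integrable_sigma3_of_continuous (by fun_prop)

end Zonal

lemma inner_single_single_eq_kron (i j : Fin 3) :
    ⟪EuclideanSpace.single i (1 : ℝ), EuclideanSpace.single j 1⟫ = kron i j := by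
  simp [EuclideanSpace.inner_single_left, kron]

/-- The fourth moment `M⁽⁴⁾_{αβγμ} = ∫ m_α m_β m_γ m_μ h_{η,n} dσ` equals
`S₄ n_α n_β n_γ n_μ + ((S₂ − S₄)/7)(n_α n_β δ_{γμ} + n_γ n_μ δ_{αβ} + n_α n_γ δ_{βμ}
+ n_β n_μ δ_{αγ} + n_α n_μ δ_{βγ} + n_β n_γ δ_{αμ})
+ (S₄/35 − 2S₂/21 + 1/15)(δ_{αβ}δ_{γμ} + δ_{αγ}δ_{βμ} + δ_{αμ}δ_{βγ})`. -/
theorem stmt16 (η : ℝ) (n : S2) (α β γ μ : Fin 3) :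
    ∫ m : S2, (m : E3) α * (m : E3) β * (m : E3) γ * (m : E3) μ * hdens η n m ∂sigma3 =
      Sord4 η n * ((n : E3) α * (n : E3) β * (n : E3) γ * (n : E3) μ) +
      (Sord2 η n - Sord4 η n) / 7 *
        ((n : E3) α * (n : E3) β * kron γ μ + (n : E3) γ * (n : E3) μ * kron α β +
         (n : E3) α * (n : E3) γ * kron β μ + (n : E3) β * (n : E3) μ * kron α γ +
         (n : E3) α * (n : E3) μ * kron β γ + (n : E3) β * (n : E3) γ * kron α μ) +
      (Sord4 η n / 35 - 2 * Sord2 η n / 21 + 1 / 15) *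
        (kron α β * kron γ μ + kron α γ * kron β μ + kron α μ * kron β γ) := by
  set Z := ∫ m : S2, Real.exp (η * ⟪(m : E3), (n : E3)⟫ ^ 2) ∂sigma3
  set g : ℝ → ℝ := fun t => Real.exp (η * t ^ 2) / Z
  have hg : Continuous g := by fun_prop
  have hZ : 0 < Z := integral_exp_pos (integrable_sigma3_of_continuous (by fun_prop))
  have hA₀ : zonalMoment g n 0 = 1 := by
    simp only [zonalMoment, g, pow_zero, one_mul, integral_div]
    exact div_self hZ.ne'
  have hS₂ : Sord2 η n =
      -1 / 2 * zonalMoment g n 0 + 3 / 2 * zonalMoment g n 2 + 0 * zonalMoment g n 4 := by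
    rw [← integral_even_quartic_mul_zonal hg n (-1 / 2) (3 / 2) 0, Sord2]
    congr 1 with m
    simp only [P2, hdens, g]
    ring
  have hS₄ : Sord4 η n =
      3 / 8 * zonalMoment g n 0 + -30 / 8 * zonalMoment g n 2 + 35 / 8 * zonalMoment g n 4 := by
    rw [← integral_even_quartic_mul_zonal hg n (3 / 8) (-30 / 8) (35 / 8), Sord4]
    congr 1 with m
    simp only [P4, hdens, g]
    ring
  have hcoord (x : E3) (i : Fin 3) : x i = ⟪EuclideanSpace.single i 1, x⟫ := by
    simp [EuclideanSpace.inner_single_left]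
  have h := integral_inner_mul_zonal hg (norm_eq_of_mem_sphere n) (EuclideanSpace.single α 1)
    (EuclideanSpace.single β 1) (EuclideanSpace.single γ 1) (EuclideanSpace.single μ 1)
  simp only [← hcoord] at h
  have hdens_eq (m : S2) : hdens η n m = g ⟪(m : E3), (n : E3)⟫ := rfl
  simp only [hdens_eq]
  rw [h, hS₂, hS₄, hA₀]
  simp only [axialQuartic, transverseInner, inner_single_single_eq_kron]
  simp only [← hcoord]
  ring
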